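/- arXiv:2503.16089 — 7 statements merged into one kernel-verified Lean document; each statement's English description precedes it below -/
import Mathlib

section
/- For any p in [1,∞), any point x in ℝ^d, and any direction v in the unit sphere that is parallel to one of the coordinate axes (i.e., v = ±e_i for some standard unit vector e_i), the limit ℓp-halfspace H^p_{x,v} equals the Euclidean halfspace H^2_{x,v}. Concretely, H^p_{x,v} = {z ∈ ℝ^d : ⟨v, z - x⟩ ≥ 0}. -/
open scoped ENNReal

noncomputable def pnorm {d : ℕ} (p : ℝ≥0∞) [Fact (1 ≤ p)] (x : Fin d → ℝ) : ℝ :=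
  ‖(WithLp.equiv p (Fin d → ℝ)).symm x‖

def Hp {d : ℕ} (p : ℝ≥0∞) [Fact (1 ≤ p)] (x v : Fin d → ℝ) : Set (Fin d → ℝ) :=
  {z | ∀ ε : ℝ, 0 < ε → pnorm p (x - z) ≤ pnorm p (x - ε • v - z)}

lemma abs_forall_iff (a : ℝ) : (∀ ε : ℝ, 0 < ε → |a| ≤ |a - ε|) ↔ a ≤ 0 := by
  constructor
  · intro h
    by_contra hc
    push_neg at hc
    have h2 := h a hc
    rw [sub_self, abs_zero, abs_of_pos hc] at h2
    linarith
  · intro ha ε hε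
    rw [abs_of_nonpos ha, abs_of_nonpos (by linarith)]
    linarith

lemma sum_rpow_le_iff {d : ℕ} (t : ℝ) (ht : 0 < t) (f g : Fin d → ℝ) (i : Fin d)
    (hfg : ∀ j, j ≠ i → f j = g j) :
    (∑ j, |f j| ^ t) ^ (1/t) ≤ (∑ j, |g j| ^ t) ^ (1/t) ↔ |f i| ≤ |g i| := by
  have hS : ∀ h : Fin d → ℝ, 0 ≤ ∑ j, |h j| ^ t := fun h =>
    Finset.sum_nonneg fun j _ => Real.rpow_nonneg (abs_nonneg _) t
  rw [Real.rpow_le_rpow_iff (hS f) (hS g) (by positivity)]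
  rw [← Finset.sum_erase_add _ _ (Finset.mem_univ i),
      ← Finset.sum_erase_add _ (fun j => |g j| ^ t) (Finset.mem_univ i)]
  have htail : ∑ j ∈ Finset.univ.erase i, |f j| ^ t
      = ∑ j ∈ Finset.univ.erase i, |g j| ^ t := by
    refine Finset.sum_congr rfl fun j hj => ?_
    rw [hfg j (Finset.ne_of_mem_erase hj)]
  rw [htail, add_le_add_iff_left]
  exact Real.rpow_le_rpow_iff (abs_nonneg _) (abs_nonneg _) ht

theorem axis_aligned_halfspace {d : ℕ} (p : ℝ≥0∞) [Fact (1 ≤ p)] (hp : p ≠ ⊤)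
    (x : Fin d → ℝ) (v : Fin d → ℝ) (i : Fin d)
    (hv : v = Pi.single i 1 ∨ v = -Pi.single i 1) :
    Hp p x v = {z : Fin d → ℝ | 0 ≤ ∑ j, v j * (z j - x j)} := by
  have ht : 0 < p.toReal := p.toReal_pos_iff_ne_top.mpr hp
  have hnorm : ∀ w : Fin d → ℝ,
      pnorm p w = (∑ j, |w j| ^ p.toReal) ^ (1 / p.toReal) := by
    intro w
    rw [pnorm, PiLp.norm_eq_sum ht]
    simp [Real.norm_eq_abs]
  have hvi : v i = 1 ∨ v i = -1 := by
    rcases hv with h | h <;> simp [h]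
  have hvj : ∀ j, j ≠ i → v j = 0 := by
    intro j hj
    rcases hv with h | h <;> simp [h, Pi.single_apply, hj]
  ext z
  simp only [Hp, Set.mem_setOf_eq]
  have key : ∀ ε : ℝ, pnorm p (x - z) ≤ pnorm p (x - ε • v - z)
      ↔ |x i - z i| ≤ |x i - z i - ε * v i| := by
    intro ε
    rw [hnorm, hnorm]
    have := sum_rpow_le_iff p.toReal ht (fun j => (x - z) j)
      (fun j => (x - ε • v - z) j) i (by
        intro j hj
        simp [hvj j hj])
    simp only [Pi.sub_apply, Pi.smul_apply, smul_eq_mul] at this ⊢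
    rw [this]
    congr! 1
    ring_nf
  have hsum : ∑ j, v j * (z j - x j) = v i * (z i - x i) := by
    apply Finset.sum_eq_single
    · intro j _ hj
      rw [hvj j hj, zero_mul]
    · intro h; exact absurd (Finset.mem_univ i) h
  constructor
  · intro h
    rw [hsum]
    rcases hvi with h1 | h1
    · have := (abs_forall_iff (x i - z i)).mp (fun ε hε => by
        have := (key ε).mp (h ε hε); rwa [h1, mul_one] at this)
      rw [h1]; linarith
    · have := (abs_forall_iff (z i - x i)).mp (fun ε hε => by
        have h2 := (key ε).mp (h ε hε)
        rw [h1] at h2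
        calc |z i - x i| = |x i - z i| := abs_sub_comm _ _
          _ ≤ |x i - z i - ε * (-1)| := h2
          _ = |z i - x i - ε| := by rw [show x i - z i - ε * (-1) = -(z i - x i - ε) by ring, abs_neg])
      rw [h1]; linarith
  · intro h ε hε
    rw [hsum] at h
    rw [key]
    rcases hvi with h1 | h1
    · rw [h1, mul_one]
      have : x i - z i ≤ 0 := by rw [h1] at h; nlinarith
      exact (abs_forall_iff _).mpr this ε hε
    · rw [h1]
      have hz : z i - x i ≤ 0 := by rw [h1] at h; nlinarith
      calc |x i - z i| = |z i - x i| := abs_sub_comm _ _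
        _ ≤ |z i - x i - ε| := (abs_forall_iff _).mpr hz ε hε
        _ = |x i - z i - ε * (-1)| := by rw [abs_sub_comm]; ring_nf
end

section
/- For any p in [1,∞) ∪ {∞}, the limit ℓp-halfspace H^p_{x,v} is invariant under positive scalings from x: if z ∈ H^p_{x,v} and δ > 0, then x + δ(z - x) ∈ H^p_{x,v}. In other words, H^p_{x,v} is a union of rays originating at x. -/
open scoped ENNReal

lemma pnorm_smul {d : ℕ} (p : ℝ≥0∞) [Fact (1 ≤ p)] (c : ℝ) (w : Fin d → ℝ) :
    pnorm p (c • w) = |c| * pnorm p w := by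
  rw [pnorm, pnorm, WithLp.equiv_symm_apply, WithLp.toLp_smul, norm_smul, Real.norm_eq_abs]

theorem halfspace_union_of_rays_general {d : ℕ} (p : ℝ≥0∞) [Fact (1 ≤ p)]
    (x v : Fin d → ℝ) (z : Fin d → ℝ) (hz : z ∈ Hp p x v)
    (δ : ℝ) (hδ : 0 < δ) :
    x + δ • (z - x) ∈ Hp p x v := by
  intro ε hε
  -- Scaling by `δ` about `x` scales both distances by `δ`, trading the step `ε` for `ε / δ`.
  have hscale : δ • (x - (ε / δ) • v - z) = x - ε • v - (x + δ • (z - x)) := by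
    rw [smul_sub, smul_sub, smul_smul, mul_div_cancel₀ ε hδ.ne']
    module
  calc pnorm p (x - (x + δ • (z - x)))
      = δ * pnorm p (x - z) := by
        rw [show x - (x + δ • (z - x)) = δ • (x - z) by module, pnorm_smul, abs_of_pos hδ]
    _ ≤ δ * pnorm p (x - (ε / δ) • v - z) := by
        gcongr
        exact hz (ε / δ) (div_pos hε hδ)
    _ = pnorm p (x - ε • v - (x + δ • (z - x))) := by
        rw [← hscale, pnorm_smul, abs_of_pos hδ]

theorem halfspace_union_of_rays {d : ℕ} (p : ℝ≥0∞) [Fact (1 ≤ p)]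
    (x v : Fin d → ℝ) (hv : v ≠ 0) (z : Fin d → ℝ) (hz : z ∈ Hp p x v)
    (δ : ℝ) (hδ : 0 < δ) :
    x + δ • (z - x) ∈ Hp p x v :=
  halfspace_union_of_rays_general p x v z hz δ hδ
end

section
/- Let p in [1,∞) ∪ {∞}, and suppose 0 ∈ ℝ^d lies in the convex hull of k ≤ d+1 unit vectors v_1, ..., v_k. Then for every point z ∈ ℝ^d there exists an index j ∈ {1,...,k} such that z lies in the limit ℓp-halfspace H^p_{0, -v_j}. Equivalently, the halfspaces H^p_{0,-v_1}, ..., H^p_{0,-v_k} cover ℝ^d. -/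
/-!
The function `x ↦ ‖z - t • x‖` is convex, so by the maximum principle on the convex hull of the
`v j`, for every `t` some `j` satisfies `‖z‖ ≤ ‖z - t • v j‖`. If `z` lay in none of the limit
halfspaces, then for each `j` we would have `‖z - t • v j‖ < ‖z‖` for some `t > 0`, hence, by
convexity of `t ↦ ‖z - t • v j‖`, for all small enough `t > 0`; finitely many `j` then share a
common `t`, a contradiction.
-/

open scoped ENNReal

open Set Filter Topology

section LimitHalfspace

variable {E : Type*} [SeminormedAddCommGroup E] [NormedSpace ℝ E]

def limitHalfspace (x v : E) : Set E :=
  {z | ∀ ε : ℝ, 0 < ε → ‖x - z‖ ≤ ‖x - ε • v - z‖}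

lemma mem_limitHalfspace_zero_neg {v z : E} :
    z ∈ limitHalfspace 0 (-v) ↔ ∀ ε : ℝ, 0 < ε → ‖z‖ ≤ ‖z - ε • v‖ := by
  simp only [limitHalfspace, mem_ofPred_eq, zero_sub, smul_neg, neg_neg, norm_neg, norm_sub_rev]

lemma convexOn_univ_norm_sub_linearMap {F : Type*} [AddCommGroup F] [Module ℝ F] (z : E)
    (g : F →ₗ[ℝ] E) : ConvexOn ℝ univ fun x => ‖z - g x‖ := by
  simpa [dist_eq_norm', Function.comp_def] using (convexOn_univ_dist z).comp_linearMap g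

lemma eventually_norm_sub_smul_lt {v z : E} {ε : ℝ} (hε : 0 < ε) (h : ‖z - ε • v‖ < ‖z‖) :
    ∀ᶠ t in 𝓝[>] (0 : ℝ), ‖z - t • v‖ < ‖z‖ := by
  have hconv := convexOn_univ_norm_sub_linearMap z (LinearMap.toSpanSingleton ℝ E v)
  filter_upwards [Ioo_mem_nhdsGT hε] with t ht
  have hseg : (t, ‖z‖) ∈ openSegment ℝ (ε, ‖z‖) (0, ‖z‖) := by
    rw [← Prod.image_mk_openSegment_left, openSegment_symm, openSegment_eq_Ioo hε]
    exact mem_image_of_mem _ ht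
  simpa using (hconv.openSegment_subset_strict_epigraph _ _ ⟨mem_univ ε, by simpa using h⟩
    ⟨mem_univ 0, by simp⟩ hseg).2

lemma exists_norm_le_norm_sub_smul_of_zero_mem_convexHull {ι : Type*} {v : ι → E}
    (h0 : (0 : E) ∈ convexHull ℝ (range v)) (z : E) (t : ℝ) : ∃ j, ‖z‖ ≤ ‖z - t • v j‖ := by
  have hconv := convexOn_univ_norm_sub_linearMap z (t • LinearMap.id)
  obtain ⟨_, ⟨j, rfl⟩, hj⟩ := hconv.exists_ge_of_mem_convexHull (subset_univ _) h0
  exact ⟨j, by simpa using hj⟩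

theorem iUnion_limitHalfspace_zero_neg_eq_univ {ι : Type*} [Finite ι] {v : ι → E}
    (h0 : (0 : E) ∈ convexHull ℝ (range v)) : ⋃ j, limitHalfspace 0 (-v j) = univ := by
  refine eq_univ_of_forall fun z => ?_
  by_contra! hz
  simp only [mem_iUnion, mem_limitHalfspace_zero_neg, not_exists, not_forall, not_le] at hz
  have hsmall : ∀ᶠ t in 𝓝[>] (0 : ℝ), ∀ j, ‖z - t • v j‖ < ‖z‖ :=
    eventually_all.2 fun j => (hz j).elim fun _ ⟨hε, h⟩ => eventually_norm_sub_smul_lt hε h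
  obtain ⟨t, ht⟩ := hsmall.exists
  obtain ⟨j, hj⟩ := exists_norm_le_norm_sub_smul_of_zero_mem_convexHull h0 z t
  exact (ht j).not_ge hj

end LimitHalfspace

lemma Hp_eq_preimage_limitHalfspace {d : ℕ} (p : ℝ≥0∞) [Fact (1 ≤ p)] (x v : Fin d → ℝ) :
    Hp p x v = WithLp.toLp p ⁻¹' limitHalfspace (WithLp.toLp p x) (WithLp.toLp p v) :=
  rfl

theorem halfspaces_cover_of_zero_in_convexHull_general {d k : ℕ} (p : ℝ≥0∞) [Fact (1 ≤ p)]
    (v : Fin k → Fin d → ℝ)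
    (h0 : (0 : Fin d → ℝ) ∈ convexHull ℝ (Set.range v)) (z : Fin d → ℝ) :
    ∃ j : Fin k, z ∈ Hp p (0 : Fin d → ℝ) (-(v j)) := by
  have h0' : (0 : WithLp p (Fin d → ℝ)) ∈ convexHull ℝ (range (WithLp.toLp p ∘ v)) := by
    rw [range_comp]
    exact (WithLp.linearEquiv p ℝ (Fin d → ℝ)).symm.toLinearMap.image_convexHull (range v) ▸
      ⟨0, h0, map_zero _⟩
  have hz := iUnion_limitHalfspace_zero_neg_eq_univ h0' ▸ mem_univ (WithLp.toLp p z)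
  simpa [Hp_eq_preimage_limitHalfspace] using hz

theorem halfspaces_cover_of_zero_in_convexHull {d k : ℕ} (p : ℝ≥0∞) [Fact (1 ≤ p)]
    (hk : k ≤ d + 1) (v : Fin k → Fin d → ℝ) (hunit : ∀ j, pnorm 2 (v j) = 1)
    (h0 : (0 : Fin d → ℝ) ∈ convexHull ℝ (Set.range v)) (z : Fin d → ℝ) :
    ∃ j : Fin k, z ∈ Hp p (0 : Fin d → ℝ) (-(v j)) :=
  halfspaces_cover_of_zero_in_convexHull_general p v h0 z
end

section
/- Tightness of the ℓp-centerpoint theorem for p ∈ (1,∞): for the point set P_d = {0, e_1, ..., e_d} ⊆ [0,1]^d consisting of the origin and the d standard unit vectors, every point c ∈ ℝ^d admits a unit direction v ∈ S^{d-1} such that |H^p_{c,v} ∩ P_d| ≤ 1 = |P_d|/(d+1). -/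
open scoped ENNReal

/-!
If some coordinate `c k` is nonzero, pushing `c` along `-sign (c k) • e_k` by `|c k|` zeroes that
coordinate, which strictly decreases the `ℓp`-distance to every point whose `k`-th coordinate
vanishes; so only `e_k` can survive. If `c = 0`, push along the diagonal direction: for `z = e_i`
the `p`-th power of the distance from `t • 𝟙` is `(1 - t) ^ p + (d - 1) t ^ p`, which is `< 1` for
small `t > 0` since `p > 1`; so only the origin survives.
-/

open Finset Filter Topology

lemma Fintype.sum_comp_single {ι M : Type*} [Fintype ι] [DecidableEq ι] [Zero M]
    (f : M → ℝ) (i : ι) (a : M) :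
    ∑ j, f ((Pi.single i a : ι → M) j) = f a + (Fintype.card ι - 1 : ℕ) * f 0 := by
  rw [Fintype.sum_eq_add_sum_compl i, Pi.single_eq_same,
    Finset.sum_congr rfl (g := fun _ => f 0) fun j hj => by
      rw [Pi.single_eq_of_ne (by simpa using hj)]]
  simp [Finset.card_compl]

lemma exists_one_sub_rpow_add_mul_rpow_lt_one {q : ℝ} (hq : 1 < q) (n : ℝ) :
    ∃ t : ℝ, 0 < t ∧ t < 1 ∧ (1 - t) ^ q + n * t ^ q < 1 := by
  have hlim : Tendsto (fun t : ℝ => n * t ^ (q - 1)) (𝓝[>] 0) (𝓝 0) := by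
    have := (Real.continuousAt_rpow_const 0 (q - 1) (Or.inr (by linarith))).tendsto.const_mul n
    simpa [Real.zero_rpow (by linarith : q - 1 ≠ 0)] using this.mono_left nhdsWithin_le_nhds
  have hunit : ∀ᶠ t in 𝓝[>] (0 : ℝ), t ∈ Set.Ioo 0 1 := Ioo_mem_nhdsGT one_pos
  obtain ⟨t, ⟨ht0, ht1⟩, hsmall⟩ := (hunit.and (hlim.eventually (gt_mem_nhds one_pos))).exists
  refine ⟨t, ht0, ht1, ?_⟩
  have hsplit : t ^ q = t * t ^ (q - 1) := by
    rw [← Real.rpow_one_add' ht0.le (by linarith), add_sub_cancel]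
  calc (1 - t) ^ q + n * t ^ q
      ≤ (1 - t) + t * (n * t ^ (q - 1)) := by
        rw [hsplit, mul_left_comm]
        gcongr
        exact Real.rpow_le_self_of_le_one (by linarith) (by linarith) hq.le
    _ < (1 - t) + t * 1 := by gcongr
    _ = 1 := by ring

section pnorm

variable {d : ℕ} {p : ℝ≥0∞} [Fact (1 ≤ p)]

lemma pnorm_eq_sum (hp : p ≠ ⊤) (x : Fin d → ℝ) :
    pnorm p x = (∑ j, |x j| ^ p.toReal) ^ (1 / p.toReal) := by
  have := (ENNReal.toReal_pos_iff_ne_top p).mpr hp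
  simp [pnorm, PiLp.norm_eq_sum this]

lemma pnorm_lt_pnorm_iff (hp : p ≠ ⊤) {x y : Fin d → ℝ} :
    pnorm p x < pnorm p y ↔ ∑ j, |x j| ^ p.toReal < ∑ j, |y j| ^ p.toReal := by
  have := (ENNReal.toReal_pos_iff_ne_top p).mpr hp
  rw [pnorm_eq_sum hp, pnorm_eq_sum hp]
  exact Real.rpow_lt_rpow_iff (by positivity) (by positivity) (by positivity)

lemma pnorm_single (i : Fin d) (a : ℝ) : pnorm p (Pi.single i a) = |a| := by
  simp [pnorm, PiLp.toLp_single]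

lemma pnorm_const (hp : p ≠ ⊤) (a : ℝ) :
    pnorm p (fun _ : Fin d => a) = (d : ℝ) ^ p.toReal⁻¹ * |a| := by
  have h := PiLp.norm_toLp_const (ι := Fin d) hp a
  simp only [one_div, ENNReal.toReal_inv, NNReal.coe_natCast, Real.norm_eq_abs, Fintype.card_fin] at h
  exact h

lemma pnorm_update_lt (hp : p ≠ ⊤) {x : Fin d → ℝ} {k : Fin d} {a : ℝ} (h : |a| < |x k|) :
    pnorm p (Function.update x k a) < pnorm p x := by
  have := (ENNReal.toReal_pos_iff_ne_top p).mpr hp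
  rw [pnorm_lt_pnorm_iff hp]
  refine Finset.sum_lt_sum (fun j _ => ?_) ⟨k, mem_univ k, ?_⟩
  · rcases eq_or_ne j k with rfl | hj
    · simp only [Function.update_self]
      gcongr
    · rw [Function.update_of_ne hj]
  · simp only [Function.update_self]
    gcongr

end pnorm

section Hp

variable {d : ℕ} {p : ℝ≥0∞} [Fact (1 ≤ p)]

lemma not_mem_Hp_of_pnorm_lt {c v z : Fin d → ℝ} {ε : ℝ} (hε : 0 < ε)
    (h : pnorm p (c - ε • v - z) < pnorm p (c - z)) : z ∉ Hp p c v :=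
  fun hz => (hz ε hε).not_gt h

lemma Hp_single_subset (hp : p ≠ ⊤) {c : Fin d → ℝ} {k : Fin d} (hk : c k ≠ 0) :
    Hp p c (Pi.single k (c k / |c k|)) ⊆ {z | z k ≠ 0} := by
  intro z hz hzk
  refine not_mem_Hp_of_pnorm_lt (abs_pos.mpr hk) ?_ hz
  have hshift : c - |c k| • Pi.single k (c k / |c k|) - z = Function.update (c - z) k 0 := by
    ext j
    rcases eq_or_ne j k with rfl | hj
    · simp [hzk, mul_div_cancel₀ _ (abs_ne_zero.mpr hk)]
    · simp [hj]
  rw [hshift]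
  exact pnorm_update_lt hp (by simpa [hzk] using hk)

lemma single_not_mem_Hp_zero_neg_const (hp1 : 1 < p) (hp : p ≠ ⊤) (i : Fin d) {a : ℝ}
    (ha : 0 < a) : Pi.single i 1 ∉ Hp p 0 (fun _ => -a) := by
  have hq : 1 < p.toReal := by simpa using (ENNReal.toReal_lt_toReal ENNReal.one_ne_top hp).mpr hp1
  obtain ⟨t, ht0, ht1, hlt⟩ := exists_one_sub_rpow_add_mul_rpow_lt_one hq ((d - 1 : ℕ) : ℝ)
  refine not_mem_Hp_of_pnorm_lt (div_pos ht0 ha) ?_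
  have hshift : 0 - (t / a) • (fun _ => -a) - Pi.single i 1 = fun j => t - (Pi.single i 1 : Fin d → ℝ) j := by
    ext j
    simp [ha.ne']
  have hsum := Fintype.sum_comp_single (fun x => |t - x| ^ p.toReal) i (1 : ℝ)
  simp only [Fintype.card_fin] at hsum
  rw [hshift, zero_sub, ← Pi.single_neg, pnorm_single, pnorm_eq_sum hp, hsum, abs_neg, abs_one]
  refine Real.rpow_lt_one (by positivity) ?_ (by positivity)
  rwa [abs_of_neg (by linarith), sub_zero, abs_of_pos ht0, neg_sub]

end Hp

theorem centerpoint_tightness {d : ℕ} (hd : 0 < d) (p : ℝ≥0∞) [Fact (1 ≤ p)]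
    (hp1 : 1 < p) (hp2 : p ≠ ⊤) (c : Fin d → ℝ) :
    ∃ v : Fin d → ℝ, pnorm 2 v = 1 ∧
      ((Hp p c v ∩ (insert 0 {z : Fin d → ℝ | ∃ i, z = Pi.single i 1})).ncard : ℝ) ≤ 1 := by
  suffices ∃ v : Fin d → ℝ, pnorm 2 v = 1 ∧
      ∃ w, Hp p c v ∩ (insert 0 {z : Fin d → ℝ | ∃ i, z = Pi.single i 1}) ⊆ {w} by
    obtain ⟨v, hv, w, hw⟩ := this
    exact ⟨v, hv, by exact_mod_cast (Set.ncard_le_ncard hw).trans (Set.ncard_singleton w).le⟩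
  by_cases hc : c = 0
  · subst hc
    refine ⟨fun _ => -(√d)⁻¹, ?_, 0, ?_⟩
    · rw [pnorm_const ENNReal.ofNat_ne_top, abs_neg, abs_inv, abs_of_nonneg (Real.sqrt_nonneg _),
        Real.sqrt_eq_rpow, ENNReal.toReal_ofNat, one_div]
      exact mul_inv_cancel₀ (by positivity)
    · rintro z ⟨hz, rfl | ⟨i, rfl⟩⟩
      · rfl
      · exact absurd hz (single_not_mem_Hp_zero_neg_const hp1 hp2 i (by positivity))
  · obtain ⟨k, hk⟩ := Function.ne_iff.mp hc
    refine ⟨Pi.single k (c k / |c k|), ?_, Pi.single k 1, ?_⟩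
    · rw [pnorm_single, abs_div, abs_abs, div_self (abs_ne_zero.mpr hk)]
    · rintro z ⟨hz, rfl | ⟨i, rfl⟩⟩
      · exact absurd (Hp_single_subset hp2 hk hz) (by simp)
      · obtain rfl : i = k := by
          by_contra h
          exact Hp_single_subset hp2 hk hz (Pi.single_eq_of_ne' h 1)
        rfl
end

section
/- Let f : [0,1]^d → [0,1]^d be λ-contracting with respect to the ℓp-metric for p ∈ [1,∞), with unique fixpoint x*. If x ∈ [0,1]^d satisfies ‖f(x) - x‖_p > ε (i.e., x is not an ε-approximate fixpoint), then for r = ε(1-λ)/(2+2λ), every z with ‖z - x*‖_p ≤ r satisfies ‖z - x‖_p > ‖z - f(x)‖_p. That is, the closed ℓp-ball of radius r around x* is disjoint from the bisector halfspace H^p_{x,f(x)}. -/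
open scoped ENNReal

theorem ball_around_fixpoint_stays {d : ℕ} (p : ℝ≥0∞) [Fact (1 ≤ p)] (hp : p ≠ ⊤)
    (f : (Fin d → ℝ) → (Fin d → ℝ)) (lam : ℝ) (hlam0 : 0 ≤ lam) (hlam1 : lam < 1)
    (hmaps : ∀ x ∈ Set.Icc (0 : Fin d → ℝ) 1, f x ∈ Set.Icc (0 : Fin d → ℝ) 1)
    (hcontr : ∀ x ∈ Set.Icc (0 : Fin d → ℝ) 1, ∀ y ∈ Set.Icc (0 : Fin d → ℝ) 1,
      pnorm p (f x - f y) ≤ lam * pnorm p (x - y))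
    (xstar : Fin d → ℝ) (hxstar : xstar ∈ Set.Icc (0 : Fin d → ℝ) 1) (hfix : f xstar = xstar)
    (ε : ℝ) (hε : 0 < ε)
    (x : Fin d → ℝ) (hx : x ∈ Set.Icc (0 : Fin d → ℝ) 1)
    (hnotapprox : ε < pnorm p (f x - x)) :
    ∀ z : Fin d → ℝ, pnorm p (z - xstar) ≤ ε * (1 - lam) / (2 + 2 * lam) →
      pnorm p (z - f x) < pnorm p (z - x) := by
  intro z hz
  set E := (WithLp.equiv p (Fin d → ℝ)).symm with hE
  have key : ∀ a b : Fin d → ℝ, pnorm p (a - b) = ‖E a - E b‖ := by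
    intro a b; simp [pnorm, hE]
  have contr : pnorm p (f x - xstar) ≤ lam * pnorm p (x - xstar) := by
    have := hcontr x hx xstar hxstar
    rwa [hfix] at this
  set A := pnorm p (x - xstar) with hA
  have hA0 : 0 ≤ A := by rw [hA, key]; exact norm_nonneg _
  have hZ0 : 0 ≤ pnorm p (z - xstar) := by rw [key]; exact norm_nonneg _
  have hεA : ε < (1 + lam) * A := by
    have t : pnorm p (f x - x) ≤ pnorm p (f x - xstar) + A := by
      rw [key, key, hA, key, norm_sub_rev (E x) (E xstar)]
      exact norm_sub_le_norm_sub_add_norm_sub (E (f x)) (E xstar) (E x)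
    nlinarith [contr]
  have h1 : pnorm p (z - f x) ≤ pnorm p (z - xstar) + lam * A := by
    have t : pnorm p (z - f x) ≤ pnorm p (z - xstar) + pnorm p (f x - xstar) := by
      rw [key, key, key, norm_sub_rev (E (f x)) (E xstar)]
      exact norm_sub_le_norm_sub_add_norm_sub (E z) (E xstar) (E (f x))
    linarith [contr]
  have h2 : A ≤ pnorm p (z - x) + pnorm p (z - xstar) := by
    rw [hA, key, key, key, norm_sub_rev (E z) (E x)]
    exact norm_sub_le_norm_sub_add_norm_sub (E x) (E z) (E xstar)
  have hden : (0:ℝ) < 2 + 2 * lam := by linarith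
  have hrmul : (ε * (1 - lam) / (2 + 2 * lam)) * (2 + 2 * lam) = ε * (1 - lam) := by
    field_simp
  nlinarith [hz, hεA, h1, h2, mul_nonneg hlam0 hA0, hε, hlam1]
end

section
/- Cone containment for ℓp-halfspaces: for any p ∈ [1,∞) ∪ {∞}, any x ∈ ℝ^d, and any unit vector v, every z ∈ ℝ^d with z ≠ x whose direction satisfies angle(z - x, v) ≤ 1/√d is contained in the limit ℓp-halfspace H^p_{x,v}; conversely, every z ∈ H^p_{x,v} with z ≠ x satisfies angle(z - x, v) ≤ π - 1/√d. -/
open scoped ENNReal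

noncomputable def pangle {d : ℕ} (a b : Fin d → ℝ) : ℝ :=
  Real.arccos ((∑ i, a i * b i) / (pnorm 2 a * pnorm 2 b))

/-!
At every `w ≠ 0` the `ℓp` norm has a subgradient `g`, namely a Hahn–Banach norming functional
read in Euclidean coordinates. Comparing the `ℓp` norm with the `ℓ2` and `ℓ∞` norms gives
`‖g‖₂ ‖w‖₂ ≤ √d ‖w‖_p = ⟪g, w⟫`, so `angle g w ≤ arccos (1/√d) < π/2 - 1/√d`. If
`angle w v ≤ 1/√d`, the triangle inequality for angles gives `⟪g, v⟫ > 0`, so the norm strictly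
increases along `v`. Conversely, if `angle w (-v) < 1/√d`, the same holds for `w + εv` with `ε`
small, so moving from `w + εv` back to `w` strictly increases the norm, i.e. the norm strictly
decreases from `w` to `w + εv`.
-/

open InnerProductGeometry Real WithLp Filter Topology
open scoped RealInnerProductSpace

section Subgradient

variable {E : Type*} [NormedAddCommGroup E] [InnerProductSpace ℝ E]

def IsSubgradient (N : E → ℝ) (w g : E) : Prop :=
  ∀ a, N w + ⟪g, a - w⟫ ≤ N a

lemma inner_pos_of_angle_lt_pi_div_two {x y : E} (h : angle x y < π / 2) : 0 < ⟪x, y⟫ := by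
  have hpos : 0 < ⟪x, y⟫ / (‖x‖ * ‖y‖) := arccos_lt_pi_div_two.1 h
  exact ((div_pos_iff.1 hpos).resolve_right fun h' => h'.2.not_ge (by positivity)).1

variable {N : E → ℝ} {θ ε : ℝ} {w v g : E}

lemma IsSubgradient.lt_apply_add_smul (hg : IsSubgradient N w g)
    (h : angle g w + angle w v < π / 2) (hε : 0 < ε) : N w < N (w + ε • v) := by
  have hgv : 0 < ⟪g, v⟫ :=
    inner_pos_of_angle_lt_pi_div_two ((angle_le_angle_add_angle g w v).trans_lt h)
  calc N w < N w + ⟪g, (w + ε • v) - w⟫ := by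
        rw [add_sub_cancel_left, real_inner_smul_right]; linarith [mul_pos hε hgv]
    _ ≤ N (w + ε • v) := hg _

lemma lt_apply_add_smul_of_angle_le
    (hN : ∀ w ≠ 0, ∃ g, IsSubgradient N w g ∧ angle g w < π / 2 - θ)
    (hw : w ≠ 0) (hwv : angle w v ≤ θ) (hε : 0 < ε) : N w < N (w + ε • v) := by
  obtain ⟨g, hg, hgw⟩ := hN w hw
  exact hg.lt_apply_add_smul (by linarith) hε

lemma angle_le_pi_sub_of_forall_le_apply_add_smul
    (hN : ∀ w ≠ 0, ∃ g, IsSubgradient N w g ∧ angle g w < π / 2 - θ)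
    (hw : w ≠ 0) (hv : v ≠ 0) (h : ∀ ε : ℝ, 0 < ε → N w ≤ N (w + ε • v)) :
    angle w v ≤ π - θ := by
  by_contra! hlt
  have hpath : ContinuousAt (fun t : ℝ => (w + t • v, -v)) 0 :=
    (continuousAt_const.add (continuousAt_id.smul continuousAt_const)).prodMk continuousAt_const
  have hcont : ContinuousAt (fun t : ℝ => angle (w + t • v) (-v)) 0 :=
    ContinuousAt.comp_of_eq (f := fun t : ℝ => (w + t • v, -v))
      (g := fun y : E × E => angle y.1 y.2)
      (continuousAt_angle (x := (w, -v)) hw (neg_ne_zero.2 hv)) hpath (by simp)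
  have hnear : ∀ᶠ t in 𝓝 (0 : ℝ), angle (w + t • v) (-v) < θ ∧ w + t • v ≠ 0 := by
    refine (hcont.eventually_lt_const ?_).and (hpath.fst.eventually_ne (by simpa using hw))
    simp only [zero_smul, add_zero, angle_neg_right]
    linarith
  obtain ⟨ε, hε, hangle, hne⟩ := hnear.exists_gt
  have hlt := lt_apply_add_smul_of_angle_le hN hne hangle.le hε
  rw [smul_neg, add_neg_cancel_right] at hlt
  exact (h ε hε).not_gt hlt

end Subgradient

lemma Real.arccos_lt_pi_div_two_sub {x : ℝ} (h0 : 0 < x) (h1 : x ≤ 1) : arccos x < π / 2 - x := by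
  rw [arccos_eq_pi_div_two_sub_arcsin, sub_lt_sub_iff_left,
    lt_arcsin_iff_sin_lt' ⟨by linarith [pi_pos], by linarith [pi_gt_three]⟩]
  exact sin_lt h0

lemma StrongDual.apply_le_norm_of_norm_le_one {E : Type*} [SeminormedAddCommGroup E]
    [NormedSpace ℝ E] (f : StrongDual ℝ E) (hf : ‖f‖ ≤ 1) (x : E) : f x ≤ ‖x‖ :=
  (le_abs_self _).trans (by simpa using f.le_of_opNorm_le hf x)

lemma PiLp.norm_toLp_ofLp_le_of_le {ι : Type*} [Fintype ι] {β : ι → Type*}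
    [∀ i, SeminormedAddCommGroup (β i)] {p q : ℝ≥0∞} [Fact (1 ≤ p)] (hpq : p ≤ q)
    (x : PiLp p β) : ‖toLp q (ofLp x)‖ ≤ ‖x‖ := by
  rcases eq_or_ne q ∞ with rfl | hq
  · rw [PiLp.norm_eq_ciSup]
    exact Real.iSup_le (fun i => PiLp.norm_apply_le x i) (norm_nonneg _)
  have hp : p ≠ ∞ := ne_top_of_le_ne_top hq hpq
  have hp1 : 1 ≤ p.toReal := by
    simpa using ENNReal.toReal_mono hp (Fact.out : 1 ≤ p)
  have hrs : p.toReal ≤ q.toReal := ENNReal.toReal_mono hq hpq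
  have hq0 : 0 < q.toReal := by linarith
  have hx : ‖x‖ ^ p.toReal = ∑ i, ‖x i‖ ^ p.toReal := by
    rw [PiLp.norm_eq_sum (by linarith), ← Real.rpow_mul (by positivity), one_div,
      inv_mul_cancel₀ (by linarith), Real.rpow_one]
  have hsum : ∑ i, ‖x i‖ ^ q.toReal ≤ ‖x‖ ^ q.toReal := calc
    ∑ i, ‖x i‖ ^ q.toReal = ∑ i, ‖x i‖ ^ p.toReal * ‖x i‖ ^ (q.toReal - p.toReal) := by
      refine Finset.sum_congr rfl fun i _ => ?_
      rw [← Real.rpow_add' (norm_nonneg _) (by linarith), add_sub_cancel]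
    _ ≤ ∑ i, ‖x i‖ ^ p.toReal * ‖x‖ ^ (q.toReal - p.toReal) := by
      gcongr with i
      exact PiLp.norm_apply_le x i
    _ = ‖x‖ ^ q.toReal := by
      rw [← Finset.sum_mul, ← hx, ← Real.rpow_add' (norm_nonneg _) (by linarith),
        add_sub_cancel]
  rw [PiLp.norm_eq_sum hq0, one_div]
  exact (Real.rpow_inv_le_iff_of_pos (by positivity) (norm_nonneg _) hq0).2 hsum

section EuclideanRepr

variable {ι : Type*} [Fintype ι]

lemma EuclideanSpace.norm_le_sqrt_card_mul {x : EuclideanSpace ℝ ι} {C : ℝ} (hC : 0 ≤ C)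
    (h : ∀ i, ‖x i‖ ≤ C) : ‖x‖ ≤ √(Fintype.card ι) * C := calc
  ‖x‖ = √(∑ i, ‖x i‖ ^ 2) := EuclideanSpace.norm_eq x
  _ ≤ √(∑ _i : ι, C ^ 2) := by gcongr with i; exact h i
  _ = √(Fintype.card ι) * C := by
    rw [Finset.sum_const, Finset.card_univ, nsmul_eq_mul, Real.sqrt_mul (by positivity),
      Real.sqrt_sq hC]

variable {p : ℝ≥0∞}

noncomputable def euclideanRepr (f : StrongDual ℝ (PiLp p fun _ : ι => ℝ)) :
    EuclideanSpace ℝ ι :=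
  toLp 2 fun i => f (PiLp.basisFun p ℝ ι i)

lemma inner_euclideanRepr (f : StrongDual ℝ (PiLp p fun _ : ι => ℝ)) (a : EuclideanSpace ℝ ι) :
    ⟪euclideanRepr f, a⟫ = f (toLp p (ofLp a)) := by
  conv_rhs => rw [← (PiLp.basisFun p ℝ ι).sum_repr (toLp p (ofLp a))]
  simp [euclideanRepr, PiLp.inner_apply]

lemma euclideanRepr_apply_le [Fact (1 ≤ p)] (f : StrongDual ℝ (PiLp p fun _ : ι => ℝ))
    (hf : ‖f‖ ≤ 1) (i : ι) : ‖euclideanRepr f i‖ ≤ 1 := by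
  classical
  simpa [euclideanRepr] using f.le_of_opNorm_le hf (PiLp.basisFun p ℝ ι i)

lemma norm_euclideanRepr_le_one [Fact (1 ≤ p)] (hp : 2 ≤ p)
    (f : StrongDual ℝ (PiLp p fun _ : ι => ℝ)) (hf : ‖f‖ ≤ 1) : ‖euclideanRepr f‖ ≤ 1 := by
  set g := euclideanRepr f
  have hsq : ‖g‖ ^ 2 ≤ ‖g‖ := calc
    ‖g‖ ^ 2 = f (toLp p (ofLp g)) := by rw [← real_inner_self_eq_norm_sq, inner_euclideanRepr]
    _ ≤ ‖toLp p (ofLp g)‖ := f.apply_le_norm_of_norm_le_one hf _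
    _ ≤ ‖g‖ := PiLp.norm_toLp_ofLp_le_of_le hp g
  nlinarith [norm_nonneg g]

lemma norm_euclideanRepr_mul_norm_le [Fact (1 ≤ p)] (f : StrongDual ℝ (PiLp p fun _ : ι => ℝ))
    (hf : ‖f‖ ≤ 1) (w : EuclideanSpace ℝ ι) :
    ‖euclideanRepr f‖ * ‖w‖ ≤ √(Fintype.card ι) * ‖toLp p (ofLp w)‖ := by
  rcases le_total p 2 with hp | hp
  · exact mul_le_mul ((EuclideanSpace.norm_le_sqrt_card_mul zero_le_one
      (euclideanRepr_apply_le f hf)).trans_eq (mul_one _))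
      (PiLp.norm_toLp_ofLp_le_of_le hp (toLp p (ofLp w))) (norm_nonneg _) (by positivity)
  · rw [← one_mul (√_ * _)]
    exact mul_le_mul (norm_euclideanRepr_le_one hp f hf)
      (EuclideanSpace.norm_le_sqrt_card_mul (norm_nonneg _)
        fun i => PiLp.norm_apply_le (toLp p (ofLp w)) i) (norm_nonneg _) zero_le_one

lemma exists_isSubgradient_norm_toLp_angle_lt [Fact (1 ≤ p)] {w : EuclideanSpace ℝ ι}
    (hw : w ≠ 0) :
    ∃ g, IsSubgradient (fun a : EuclideanSpace ℝ ι => ‖toLp p (ofLp a)‖) w g ∧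
      angle g w < π / 2 - 1 / √(Fintype.card ι) := by
  obtain ⟨f, hf, hfw⟩ := exists_dual_vector'' ℝ (toLp p (ofLp w))
  set g := euclideanRepr f
  have hw' : 0 < ‖toLp p (ofLp w)‖ := norm_pos_iff.2 (by simpa using hw)
  have hgw : ⟪g, w⟫ = ‖toLp p (ofLp w)‖ := by rw [inner_euclideanRepr, hfw]; rfl
  obtain ⟨i, -⟩ : ∃ i, w i ≠ 0 := by by_contra! h; exact hw (PiLp.ext h)
  have hd : 1 ≤ √(Fintype.card ι) :=
    Real.one_le_sqrt.2 (by exact_mod_cast Fintype.card_pos_iff.2 ⟨i⟩)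
  refine ⟨g, fun a => ?_, ?_⟩
  · rw [inner_sub_right, inner_euclideanRepr, hgw]
    linarith [f.apply_le_norm_of_norm_le_one hf (toLp p (ofLp a))]
  · have hpos : 0 < ‖g‖ * ‖w‖ := hw'.trans_le (hgw ▸ real_inner_le_norm g w)
    have hcos : 1 / √(Fintype.card ι) ≤ ⟪g, w⟫ / (‖g‖ * ‖w‖) := by
      rw [hgw, div_le_div_iff₀ (by positivity) hpos]
      linarith [norm_euclideanRepr_mul_norm_le f hf w]
    calc angle g w = arccos (⟪g, w⟫ / (‖g‖ * ‖w‖)) := rfl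
      _ ≤ arccos (1 / √(Fintype.card ι)) := arccos_le_arccos hcos
      _ < π / 2 - 1 / √(Fintype.card ι) :=
        arccos_lt_pi_div_two_sub (by positivity) ((div_le_one (by positivity)).2 hd)

end EuclideanRepr

lemma pangle_eq_angle {d : ℕ} (a b : Fin d → ℝ) : pangle a b = angle (toLp 2 a) (toLp 2 b) := by
  simp [pangle, angle, pnorm, EuclideanSpace.inner_toLp_toLp, dotProduct, mul_comm]

lemma mem_Hp_iff {d : ℕ} {p : ℝ≥0∞} [Fact (1 ≤ p)] {x v z : Fin d → ℝ} :
    z ∈ Hp p x v ↔ ∀ ε : ℝ, 0 < ε → ‖toLp p (z - x)‖ ≤ ‖toLp p (z - x + ε • v)‖ := by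
  refine forall₂_congr fun ε _ => ?_
  rw [pnorm, pnorm, show x - z = -(z - x) by abel, show x - ε • v - z = -(z - x + ε • v) by abel]
  simp only [WithLp.equiv_symm_apply, toLp_neg, norm_neg]

theorem cone_containment {d : ℕ} (p : ℝ≥0∞) [Fact (1 ≤ p)]
    (x v : Fin d → ℝ) (hv : pnorm 2 v = 1) :
    (∀ z : Fin d → ℝ, z ≠ x → pangle (z - x) v ≤ 1 / Real.sqrt d → z ∈ Hp p x v) ∧
    (∀ z : Fin d → ℝ, z ≠ x → z ∈ Hp p x v → pangle (z - x) v ≤ Real.pi - 1 / Real.sqrt d) := by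
  have hN (w : EuclideanSpace ℝ (Fin d)) (hw : w ≠ 0) :
      ∃ g, IsSubgradient (fun a => ‖toLp p (ofLp a)‖) w g ∧ angle g w < π / 2 - 1 / √d := by
    simpa only [Fintype.card_fin] using exists_isSubgradient_norm_toLp_angle_lt (p := p) hw
  have hv0 : toLp 2 v ≠ 0 := fun h => by simp [pnorm, h] at hv
  have hne {z : Fin d → ℝ} (hz : z ≠ x) : toLp 2 (z - x) ≠ 0 := by simpa [sub_eq_zero] using hz
  refine ⟨fun z hz hangle => ?_, fun z hz hmem => ?_⟩
  · rw [pangle_eq_angle] at hangle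
    exact mem_Hp_iff.2 fun ε hε => (lt_apply_add_smul_of_angle_le hN (hne hz) hangle hε).le
  · rw [pangle_eq_angle]
    exact angle_le_pi_sub_of_forall_le_apply_add_smul hN (hne hz) hv0 (mem_Hp_iff.1 hmem)
end

section
/- For any p ∈ [1,∞) ∪ {∞} and any x ∈ ℝ^d with ‖x‖_2 > 2d, the unit cube [0,1]^d is contained in the limit ℓp-halfspace H^p_{x,-x}. -/
/-!
For `t ≥ 1` the identity `t • (x - z) = (t • x - z) - (t - 1) • z` gives
`‖t • x - z‖ ≥ ‖x - z‖ + (t - 1) (‖x - z‖ - ‖z‖)`, so moving `x` away from the origin can only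
increase its distance to `z` once `‖z‖ ≤ ‖x - z‖`, in particular once `2 ‖z‖ ≤ ‖x‖`.
For `z` in the unit cube and `‖x‖₂ > 2d` this holds in every `ℓᵖ` norm: if `p ≤ 2` then
`‖x‖ₚ ≥ ‖x‖₂ > 2d ≥ 2 ‖z‖₁ ≥ 2 ‖z‖ₚ`, and if `p ≥ 2` then
`‖x‖ₚ ≥ ‖x‖_∞ ≥ ‖x‖₂ / √d > 2 √d ≥ 2 ‖z‖₂ ≥ 2 ‖z‖ₚ`.
-/

open scoped ENNReal

namespace PiLp

variable {ι : Type*} [Fintype ι] {β : ι → Type*} [∀ i, SeminormedAddCommGroup (β i)]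

theorem norm_toLp_le_norm_toLp_of_le {p q : ℝ≥0∞} [Fact (1 ≤ p)] [Fact (1 ≤ q)] (hpq : p ≤ q)
    (f : ∀ i, β i) : ‖WithLp.toLp q f‖ ≤ ‖WithLp.toLp p f‖ := by
  set N := ‖WithLp.toLp p f‖ with hN_def
  have hfN : ∀ i, ‖f i‖ ≤ N := fun i => by simpa using norm_apply_le (WithLp.toLp p f) i
  rcases q.dichotomy with rfl | hq
  · simpa using (pi_norm_le_iff_of_nonneg (norm_nonneg _)).2 hfN
  have hq_top : q ≠ ∞ := (ENNReal.toReal_pos_iff_ne_top q).1 (by linarith)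
  have hp : 1 ≤ p.toReal := p.dichotomy.resolve_left (ne_top_of_le_ne_top hq_top hpq)
  have hpq' : p.toReal ≤ q.toReal := ENNReal.toReal_mono hq_top hpq
  have hN : ∑ i, ‖f i‖ ^ p.toReal = N ^ p.toReal := by
    rw [hN_def, norm_eq_sum (by linarith), one_div,
      Real.rpow_inv_rpow (by positivity) (by linarith)]
  have hsplit : ∀ a : ℝ, 0 ≤ a → a ^ q.toReal = a ^ (q.toReal - p.toReal) * a ^ p.toReal :=
    fun a ha => by rw [← Real.rpow_add' ha (by linarith), sub_add_cancel]
  have hsum : ∑ i, ‖f i‖ ^ q.toReal ≤ N ^ q.toReal :=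
    calc ∑ i, ‖f i‖ ^ q.toReal
        = ∑ i, ‖f i‖ ^ (q.toReal - p.toReal) * ‖f i‖ ^ p.toReal := by
          simp only [hsplit _ (norm_nonneg _)]
      _ ≤ ∑ i, N ^ (q.toReal - p.toReal) * ‖f i‖ ^ p.toReal := by
          gcongr with i
          exact hfN i
      _ = N ^ q.toReal := by rw [← Finset.mul_sum, hN, hsplit N (norm_nonneg _)]
  rw [norm_eq_sum (by linarith)]
  calc (∑ i, ‖f i‖ ^ q.toReal) ^ (1 / q.toReal) ≤ (N ^ q.toReal) ^ (1 / q.toReal) := by gcongr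
    _ = N := by rw [one_div, Real.rpow_rpow_inv (norm_nonneg _) (by linarith)]

theorem norm_toLp_le_card_rpow_mul (p : ℝ≥0∞) [Fact (1 ≤ p)] (f : ∀ i, β i) :
    ‖WithLp.toLp p f‖ ≤ (Fintype.card ι : ℝ) ^ (1 / p).toReal * ‖f‖ := by
  simpa using (lipschitzWith_toLp p β).norm_le_mul (WithLp.toLp_zero p) f

theorem two_mul_norm_toLp_le_of_two_mul_card_lt (p : ℝ≥0∞) [Fact (1 ≤ p)] {x z : ∀ i, β i}
    (hz : ‖z‖ ≤ 1) (hx : 2 * Fintype.card ι < ‖WithLp.toLp 2 x‖) :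
    2 * ‖WithLp.toLp p z‖ ≤ ‖WithLp.toLp p x‖ := by
  set n : ℝ := (Fintype.card ι : ℝ)
  have hn : 0 ≤ n := Nat.cast_nonneg _
  have hsqrt : n ^ (1 / (2 : ℝ≥0∞)).toReal = √n := by
    rw [Real.sqrt_eq_rpow]; norm_num
  have hx2 : ‖WithLp.toLp 2 x‖ ≤ √n * ‖x‖ := hsqrt ▸ norm_toLp_le_card_rpow_mul 2 x
  have hz2 : ‖WithLp.toLp 2 z‖ ≤ √n :=
    (hsqrt ▸ norm_toLp_le_card_rpow_mul 2 z).trans (mul_le_of_le_one_right (by positivity) hz)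
  have hz1 : ‖WithLp.toLp 1 z‖ ≤ n * ‖z‖ := by simpa using norm_toLp_le_card_rpow_mul 1 z
  rcases le_total p 2 with hp | hp
  · have hxp := norm_toLp_le_norm_toLp_of_le hp x
    have hzp := norm_toLp_le_norm_toLp_of_le (Fact.out : 1 ≤ p) z
    linarith [mul_le_of_le_one_right hn hz]
  · have hxp : ‖x‖ ≤ ‖WithLp.toLp p x‖ := by
      simpa using norm_toLp_le_norm_toLp_of_le (le_top : p ≤ ∞) x
    have hzp := norm_toLp_le_norm_toLp_of_le hp z
    have hx_sup : 2 * √n < ‖x‖ := by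
      by_contra! h
      nlinarith [mul_le_mul_of_nonneg_left h (Real.sqrt_nonneg n), Real.mul_self_sqrt hn]
    linarith

end PiLp

theorem norm_sub_le_norm_smul_sub {E : Type*} [SeminormedAddCommGroup E] [NormedSpace ℝ E]
    {x z : E} (hzx : 2 * ‖z‖ ≤ ‖x‖) {t : ℝ} (ht : 1 ≤ t) : ‖x - z‖ ≤ ‖t • x - z‖ := by
  have hz : ‖z‖ ≤ ‖x - z‖ := by linarith [norm_sub_norm_le x z]
  have htri : t * ‖x - z‖ ≤ ‖t • x - z‖ + (t - 1) * ‖z‖ := by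
    have : t • (x - z) = (t • x - z) - (t - 1) • z := by module
    calc t * ‖x - z‖ = ‖(t • x - z) - (t - 1) • z‖ := by
          rw [← this, norm_smul, Real.norm_of_nonneg (by linarith)]
      _ ≤ ‖t • x - z‖ + ‖(t - 1) • z‖ := norm_sub_le _ _
      _ = ‖t • x - z‖ + (t - 1) * ‖z‖ := by
          rw [norm_smul, Real.norm_of_nonneg (by linarith)]
  linarith [mul_le_mul_of_nonneg_left hz (by linarith : 0 ≤ t - 1)]

theorem cube_in_far_halfspace {d : ℕ} (p : ℝ≥0∞) [Fact (1 ≤ p)]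
    (x : Fin d → ℝ) (hx : 2 * d < pnorm 2 x) :
    Set.Icc (0 : Fin d → ℝ) 1 ⊆ Hp p x (-x) := by
  intro z hz ε hε
  have hz1 : ‖z‖ ≤ 1 := (pi_norm_le_iff_of_nonneg zero_le_one).2 fun i => by
    rw [Real.norm_of_nonneg (hz.1 i)]; exact hz.2 i
  have hfar : 2 * pnorm p z ≤ pnorm p x :=
    PiLp.two_mul_norm_toLp_le_of_two_mul_card_lt p hz1 (by simpa [pnorm] using hx)
  have hscale : x - ε • -x - z = (1 + ε) • x - z := by module
  simp only [pnorm, WithLp.equiv_symm_apply, hscale, WithLp.toLp_sub, WithLp.toLp_smul] at hfar ⊢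
  exact norm_sub_le_norm_smul_sub hfar (by linarith)
end
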